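/- Let M > 0, α ≥ 0, and let ρ₃ be the unique zero in (0, 1) of J(r) = π/(4M) − ∑_{n=2}^∞ 2n·r^{n−1}/(1 + (n − 1)α). Define F₃ on the unit disc D by F₃(z) = (π/(4M))·z − ∑_{n=2}^∞ 2·zⁿ/(1 + (n − 1)α). Then for every r with ρ₃ < r ≤ 1 there exist z₁ ≠ z₂ in D_r with F₃(z₁) = F₃(z₂); that is, F₃ is not injective on D_r for any r ∈ (ρ₃, 1]. Hence the univalence radius ρ₃ in the Landau-type theorem for the class G_{k,H}(α, 1) is sharp. -/

import Mathlib

/-!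
On `[0, 1)` the function `F₃` is real, `f(x) = P x - ∑ₙ 2 x^(n+2) / cₙ` with `P = π/(4M)` and
`cₙ = 1 + (n+1)α ≥ 1`, and `J(ρ₃) = 0` says that `P` is the termwise derivative of the series at
`ρ₃`. Each `x^(n+2)` is strictly convex on `[0, ∞)`, so its secant slopes lie below its derivative
at `ρ₃` on `[0, ρ₃]` and above it on `[ρ₃, 1)`; summing, `f` strictly increases on `[0, ρ₃]` and
strictly decreases on `[ρ₃, 1)`. Since `f(0) = 0 < f(ρ₃)`, continuity gives `x₂ ∈ (ρ₃, r)` with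
`0 < f(x₂) < f(ρ₃)`, and the intermediate value theorem gives `x₁ ∈ [0, ρ₃]` with `f(x₁) = f(x₂)`.
-/

open Filter Set

theorem pow_sub_pow_lt_mul_pow (n : ℕ) {x y b : ℝ} (hx : 0 ≤ x) (hxy : x < y) (hyb : y ≤ b) :
    y ^ (n + 2) - x ^ (n + 2) < (n + 2) * b ^ (n + 1) * (y - x) := by
  have hslope := (strictConvexOn_pow (n := n + 2) (by omega)).slope_lt_of_hasDerivAt
    (mem_Ici.2 hx) (mem_Ici.2 (hx.trans hxy.le)) hxy (hasDerivAt_pow (n + 2) y)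
  rw [slope_def_field, div_lt_iff₀ (sub_pos.2 hxy)] at hslope
  calc y ^ (n + 2) - x ^ (n + 2) < ((n + 2 : ℕ) : ℝ) * y ^ (n + 2 - 1) * (y - x) := hslope
    _ ≤ (n + 2) * b ^ (n + 1) * (y - x) := by
      push_cast
      gcongr
      linarith

theorem mul_pow_lt_pow_sub_pow (n : ℕ) {a x y : ℝ} (ha : 0 ≤ a) (hax : a ≤ x) (hxy : x < y) :
    (n + 2) * a ^ (n + 1) * (y - x) < y ^ (n + 2) - x ^ (n + 2) := by
  have hx : 0 ≤ x := ha.trans hax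
  have hslope := (strictConvexOn_pow (n := n + 2) (by omega)).lt_slope_of_hasDerivAt
    (mem_Ici.2 hx) (mem_Ici.2 (hx.trans hxy.le)) hxy (hasDerivAt_pow (n + 2) x)
  rw [slope_def_field, lt_div_iff₀ (sub_pos.2 hxy)] at hslope
  calc (n + 2) * a ^ (n + 1) * (y - x) ≤ ((n + 2 : ℕ) : ℝ) * x ^ (n + 2 - 1) * (y - x) := by
        push_cast
        gcongr
    _ < y ^ (n + 2) - x ^ (n + 2) := hslope

noncomputable section

def extremalTail (c : ℕ → ℝ) (x : ℝ) : ℝ := ∑' n : ℕ, 2 * x ^ (n + 2) / c n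

def extremalTailDeriv (c : ℕ → ℝ) (x : ℝ) : ℝ := ∑' n : ℕ, 2 * ((n : ℝ) + 2) * x ^ (n + 1) / c n

end

section Extremal

variable {c : ℕ → ℝ}

theorem summable_extremalTail (hc : ∀ n, 1 ≤ c n) {t : ℝ} (ht : |t| < 1) :
    Summable fun n : ℕ => 2 * t ^ (n + 2) / c n := by
  refine Summable.of_norm_bounded
    ((summable_geometric_of_lt_one (abs_nonneg t) ht).mul_left (2 * |t| ^ 2)) fun n => ?_
  have hcn : 0 < c n := one_pos.trans_le (hc n)
  calc ‖2 * t ^ (n + 2) / c n‖ = 2 * |t| ^ (n + 2) / c n := by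
        rw [Real.norm_eq_abs, abs_div, abs_mul, abs_pow, abs_two, abs_of_pos hcn]
    _ ≤ 2 * |t| ^ (n + 2) := div_le_self (by positivity) (hc n)
    _ = 2 * |t| ^ 2 * |t| ^ n := by ring

theorem summable_extremalTailDeriv (hc : ∀ n, 1 ≤ c n) {t : ℝ} (ht : |t| < 1) :
    Summable fun n : ℕ => 2 * ((n : ℝ) + 2) * t ^ (n + 1) / c n := by
  have hgeom : Summable fun n : ℕ => 2 * |t| * ((n : ℝ) ^ 1 * |t| ^ n) + 4 * |t| * |t| ^ n :=
    ((summable_pow_mul_geometric_of_norm_lt_one (R := ℝ) 1 (by rwa [Real.norm_eq_abs, abs_abs])).mul_left _).add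
      ((summable_geometric_of_lt_one (abs_nonneg t) ht).mul_left _)
  refine Summable.of_norm_bounded hgeom fun n => ?_
  have hcn : 0 < c n := one_pos.trans_le (hc n)
  calc ‖2 * ((n : ℝ) + 2) * t ^ (n + 1) / c n‖ = 2 * ((n : ℝ) + 2) * |t| ^ (n + 1) / c n := by
        rw [Real.norm_eq_abs, abs_div, abs_mul, abs_mul, abs_pow, abs_two, abs_of_pos hcn,
          abs_of_nonneg (by positivity : (0 : ℝ) ≤ n + 2)]
    _ ≤ 2 * ((n : ℝ) + 2) * |t| ^ (n + 1) := div_le_self (by positivity) (hc n)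
    _ = 2 * |t| * ((n : ℝ) ^ 1 * |t| ^ n) + 4 * |t| * |t| ^ n := by ring

theorem ofReal_extremalTail (c : ℕ → ℝ) (x : ℝ) :
    ((extremalTail c x : ℝ) : ℂ) = ∑' n : ℕ, 2 * (x : ℂ) ^ (n + 2) / (c n : ℂ) := by
  rw [extremalTail, Complex.ofReal_tsum]
  push_cast
  rfl

theorem continuousOn_extremalTail (hc : ∀ n, 1 ≤ c n) :
    ContinuousOn (extremalTail c) (Metric.ball 0 1) := by
  intro x hx
  obtain ⟨b, hxb, hb1⟩ := exists_between (mem_ball_zero_iff.1 hx)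
  have hb0 : 0 ≤ b := (norm_nonneg x).trans hxb.le
  have hball : ContinuousOn (extremalTail c) (Metric.ball 0 b) := by
    refine continuousOn_tsum (fun n => by fun_prop)
      (summable_extremalTail hc (t := b) (by rwa [abs_of_nonneg hb0])) fun n y hy => ?_
    have hcn : 0 < c n := one_pos.trans_le (hc n)
    have hyb : |y| ≤ b := (mem_ball_zero_iff.1 hy).le
    rw [Real.norm_eq_abs, abs_div, abs_mul, abs_pow, abs_two, abs_of_pos hcn]
    gcongr
  exact (hball.continuousAt (Metric.isOpen_ball.mem_nhds (mem_ball_zero_iff.2 hxb)))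
    |>.continuousWithinAt

theorem extremalTail_sub_lt (hc : ∀ n, 1 ≤ c n) {x y ρ : ℝ} (hx : 0 ≤ x) (hxy : x < y)
    (hyρ : y ≤ ρ) (hρ : ρ < 1) :
    extremalTail c y - extremalTail c x < (y - x) * extremalTailDeriv c ρ := by
  have habs : ∀ t : ℝ, 0 ≤ t → t < 1 → |t| < 1 := fun t h0 h1 => by rwa [abs_of_nonneg h0]
  have hsx := summable_extremalTail hc (habs x hx (by linarith))
  have hsy := summable_extremalTail hc (habs y (by linarith) (by linarith))
  have hsD := summable_extremalTailDeriv hc (habs ρ (by linarith) hρ)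
  have hterm : ∀ n : ℕ, 2 * y ^ (n + 2) / c n - 2 * x ^ (n + 2) / c n
      < (y - x) * (2 * ((n : ℝ) + 2) * ρ ^ (n + 1) / c n) := fun n => by
    have hpow := pow_sub_pow_lt_mul_pow n hx hxy hyρ
    rw [← sub_div, ← mul_div_assoc]
    exact div_lt_div_of_pos_right (by linarith) (one_pos.trans_le (hc n))
  rw [extremalTail, extremalTail, extremalTailDeriv, ← hsy.tsum_sub hsx, ← tsum_mul_left]
  exact (hsy.sub hsx).tsum_lt_tsum (fun n => (hterm n).le) (hterm 0) (hsD.mul_left _)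

theorem lt_extremalTail_sub (hc : ∀ n, 1 ≤ c n) {x y ρ : ℝ} (hρ : 0 ≤ ρ) (hρx : ρ ≤ x)
    (hxy : x < y) (hy : y < 1) :
    (y - x) * extremalTailDeriv c ρ < extremalTail c y - extremalTail c x := by
  have habs : ∀ t : ℝ, 0 ≤ t → t < 1 → |t| < 1 := fun t h0 h1 => by rwa [abs_of_nonneg h0]
  have hsx := summable_extremalTail hc (habs x (by linarith) (by linarith))
  have hsy := summable_extremalTail hc (habs y (by linarith) hy)
  have hsD := summable_extremalTailDeriv hc (habs ρ hρ (by linarith))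
  have hterm : ∀ n : ℕ, (y - x) * (2 * ((n : ℝ) + 2) * ρ ^ (n + 1) / c n)
      < 2 * y ^ (n + 2) / c n - 2 * x ^ (n + 2) / c n := fun n => by
    have hpow := mul_pow_lt_pow_sub_pow n hρ hρx hxy
    rw [← sub_div, ← mul_div_assoc]
    exact div_lt_div_of_pos_right (by linarith) (one_pos.trans_le (hc n))
  rw [extremalTail, extremalTail, extremalTailDeriv, ← hsy.tsum_sub hsx, ← tsum_mul_left]
  exact (hsD.mul_left _).tsum_lt_tsum (fun n => (hterm n).le) (hterm 0) (hsy.sub hsx)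

theorem strictMonoOn_extremal (hc : ∀ n, 1 ≤ c n) {ρ : ℝ} (hρ : ρ < 1) :
    StrictMonoOn (fun x => extremalTailDeriv c ρ * x - extremalTail c x) (Icc 0 ρ) :=
  fun x hx y hy hxy => by
    have := extremalTail_sub_lt hc hx.1 hxy hy.2 hρ
    dsimp only
    linarith

theorem strictAntiOn_extremal (hc : ∀ n, 1 ≤ c n) {ρ : ℝ} (hρ : 0 ≤ ρ) :
    StrictAntiOn (fun x => extremalTailDeriv c ρ * x - extremalTail c x) (Ico ρ 1) :=
  fun x hx y hy hxy => by
    have := lt_extremalTail_sub hc hρ hx.1 hxy hy.2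
    dsimp only
    linarith

theorem exists_lt_extremal_eq (hc : ∀ n, 1 ≤ c n) {ρ r : ℝ} (hρ : 0 < ρ) (hρr : ρ < r)
    (hr : r ≤ 1) :
    ∃ x₁ x₂, 0 ≤ x₁ ∧ x₁ < x₂ ∧ x₂ < r ∧
      extremalTailDeriv c ρ * x₁ - extremalTail c x₁ =
        extremalTailDeriv c ρ * x₂ - extremalTail c x₂ := by
  set f : ℝ → ℝ := fun x => extremalTailDeriv c ρ * x - extremalTail c x
  have hρ1 : ρ < 1 := hρr.trans_le hr
  have hcont : ContinuousOn f (Metric.ball 0 1) :=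
    (continuousOn_const.mul continuousOn_id).sub (continuousOn_extremalTail hc)
  have hf0 : f 0 = 0 := by simp [f, extremalTail]
  have hfρ : 0 < f ρ :=
    hf0 ▸ strictMonoOn_extremal hc hρ1 ⟨le_rfl, hρ.le⟩ ⟨hρ.le, le_rfl⟩ hρ
  have hball : Icc 0 ρ ⊆ Metric.ball 0 1 := fun x hx => by
    rw [mem_ball_zero_iff, Real.norm_of_nonneg hx.1]
    exact hx.2.trans_lt hρ1
  obtain ⟨x₂, hfx₂, hρx₂, hx₂r⟩ : ∃ x₂, 0 < f x₂ ∧ ρ < x₂ ∧ x₂ < r :=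
    ((((hcont.continuousAt (Metric.isOpen_ball.mem_nhds (hball ⟨hρ.le, le_rfl⟩))).eventually
      (eventually_gt_nhds hfρ)).filter_mono nhdsWithin_le_nhds).and (Ioo_mem_nhdsGT hρr)).exists
  have hfx₂ρ : f x₂ < f ρ :=
    strictAntiOn_extremal hc hρ.le ⟨le_rfl, hρ1⟩ ⟨hρx₂.le, by linarith⟩ hρx₂
  obtain ⟨x₁, hx₁, hfx₁⟩ :=
    intermediate_value_Icc hρ.le (hcont.mono hball) ⟨hf0.symm ▸ hfx₂.le, hfx₂ρ.le⟩
  exact ⟨x₁, x₂, hx₁.1, hx₁.2.trans_lt hρx₂, hx₂r, hfx₁⟩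

end Extremal

theorem landau_GkHa_sharpness_general (M α : ℝ) (hα : 0 ≤ α)
    (ρ₃ : ℝ) (hρ₃ : ρ₃ ∈ Set.Ioo (0:ℝ) 1)
    (hroot : Real.pi / (4 * M)
        - ∑' n : ℕ, 2 * ((n : ℝ) + 2) * ρ₃ ^ (n + 1) / (1 + ((n : ℝ) + 1) * α) = 0) :
    ∀ r : ℝ, ρ₃ < r → r ≤ 1 →
      ∃ z₁ ∈ Metric.ball (0:ℂ) r, ∃ z₂ ∈ Metric.ball (0:ℂ) r, z₁ ≠ z₂ ∧
        ((Real.pi / (4 * M) : ℝ) : ℂ) * z₁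
            - ∑' n : ℕ, 2 * z₁ ^ (n + 2) / (1 + ((n : ℕ) + 1 : ℂ) * (α : ℂ)) =
          ((Real.pi / (4 * M) : ℝ) : ℂ) * z₂
            - ∑' n : ℕ, 2 * z₂ ^ (n + 2) / (1 + ((n : ℕ) + 1 : ℂ) * (α : ℂ)) := by
  intro r hρr hr
  set c : ℕ → ℝ := fun n => 1 + ((n : ℝ) + 1) * α
  have hc : ∀ n, 1 ≤ c n := fun n => le_add_of_nonneg_right (by positivity)
  have hP : Real.pi / (4 * M) = extremalTailDeriv c ρ₃ := sub_eq_zero.1 hroot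
  have hF : ∀ x : ℝ, ((Real.pi / (4 * M) : ℝ) : ℂ) * x
      - ∑' n : ℕ, 2 * (x : ℂ) ^ (n + 2) / (1 + ((n : ℕ) + 1 : ℂ) * (α : ℂ)) =
        ((extremalTailDeriv c ρ₃ * x - extremalTail c x : ℝ) : ℂ) := fun x => by
    push_cast [hP, ofReal_extremalTail, c]
    rfl
  have hball : ∀ x : ℝ, 0 ≤ x → x < r → (x : ℂ) ∈ Metric.ball (0 : ℂ) r := fun x hx hxr => by
    rwa [mem_ball_zero_iff, Complex.norm_real, Real.norm_of_nonneg hx]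
  obtain ⟨x₁, x₂, hx₁, hx₁₂, hx₂r, heq⟩ := exists_lt_extremal_eq hc hρ₃.1 hρr hr
  exact ⟨x₁, hball x₁ hx₁ (hx₁₂.trans hx₂r), x₂, hball x₂ (hx₁.trans hx₁₂.le) hx₂r,
    Complex.ofReal_injective.ne hx₁₂.ne, by rw [hF, hF, heq]⟩

/-- Sharpness of the univalence radius `ρ₃` for the class `G_{k,H}(α,1)`: if
`ρ₃` is the unique zero in `(0,1)` of
`J(r) = π/(4M) - ∑_{n≥2} 2n r^{n-1}/(1 + (n-1)α)`, then the extremal function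
`F₃(z) = (π/(4M)) z - ∑_{n≥2} 2 zⁿ/(1 + (n-1)α)` is not injective on `D_r`
for any `r ∈ (ρ₃, 1]`. -/
theorem landau_GkHa_sharpness (M α : ℝ) (hM : 0 < M) (hα : 0 ≤ α)
    (ρ₃ : ℝ) (hρ₃ : ρ₃ ∈ Set.Ioo (0:ℝ) 1)
    (hroot : Real.pi / (4 * M)
        - ∑' n : ℕ, 2 * ((n : ℝ) + 2) * ρ₃ ^ (n + 1) / (1 + ((n : ℝ) + 1) * α) = 0)
    (huniq : ∀ r ∈ Set.Ioo (0:ℝ) 1,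
      Real.pi / (4 * M)
          - ∑' n : ℕ, 2 * ((n : ℝ) + 2) * r ^ (n + 1) / (1 + ((n : ℝ) + 1) * α) = 0 →
        r = ρ₃) :
    ∀ r : ℝ, ρ₃ < r → r ≤ 1 →
      ∃ z₁ ∈ Metric.ball (0:ℂ) r, ∃ z₂ ∈ Metric.ball (0:ℂ) r, z₁ ≠ z₂ ∧
        ((Real.pi / (4 * M) : ℝ) : ℂ) * z₁
            - ∑' n : ℕ, 2 * z₁ ^ (n + 2) / (1 + ((n : ℕ) + 1 : ℂ) * (α : ℂ)) =
          ((Real.pi / (4 * M) : ℝ) : ℂ) * z₂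
            - ∑' n : ℕ, 2 * z₂ ^ (n + 2) / (1 + ((n : ℕ) + 1 : ℂ) * (α : ℂ)) :=
  landau_GkHa_sharpness_general M α hα ρ₃ hρ₃ hroot
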